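/- arXiv:1401.2648 — 2 statements merged into one kernel-verified Lean document; each statement's English description precedes it below -/
import Mathlib

section
/- Let n : ℕ and let R be a finite list of words in n generators, and let G be the finitely presented group PresentedGroup S, where S ⊆ FreeGroup (Fin n) is the set of elements determined by R. If G is conjugacy separable, then the conjugacy problem for this presentation is decidable: the predicate on pairs of words (w, v) asserting that the elements of G represented by w and by v are conjugate in G satisfies ComputablePred. -/
/-!
Conjugacy in a finitely presented group `⟨X | R⟩` is always recursively enumerable: `w` and `v`
are conjugate iff `u w u⁻¹ v⁻¹` is, for some word `u`, freely equal to a product of conjugates of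
relators and their inverses, and free equality is decided by free reduction. Conjugacy
separability makes non-conjugacy recursively enumerable as well: `w` and `v` are not conjugate iff
some finite group, given by its multiplication table together with images of the generators that
satisfy the relators, has non-conjugate images of `w` and `v`, and whether given data is such a
witness is decidable. A predicate that is r.e. and co-r.e. is computable (Post).
-/

/-- The set of relators in the free group determined by a list of words. -/
def relsOf {α : Type} (R : List (List (α × Bool))) : Set (FreeGroup α) :=
  {x | ∃ r ∈ R, x = FreeGroup.mk r}

/-- The element of the presented group represented by a word. -/
def wordElt {α : Type} (R : List (List (α × Bool))) (w : List (α × Bool)) :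
    PresentedGroup (relsOf R) :=
  PresentedGroup.mk (relsOf R) (FreeGroup.mk w)

open Primrec

section Computability

variable {α β : Type*} [Primcodable α] [Primcodable β]

theorem REPred.exists_of_primrecRel {p : α → β → Prop} (hp : PrimrecRel p) :
    REPred fun a => ∃ b, p a b := by
  classical
  have hsearch : Computable₂ fun a k =>
      (Encodable.decode (α := β) k).bind (Option.guard fun b => p a b) :=
    (option_bind (Primrec.decode.comp snd)
      (option_guard (p := fun (x : (α × ℕ) × β) b => p x.1.1 b)
        (hp.comp (fst.comp (fst.comp fst)) snd) snd).to₂).to_comp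
  refine (Partrec.rfindOpt hsearch).dom_re.of_eq fun a => ?_
  simp only [Nat.rfindOpt_dom, Option.mem_def, Option.bind_eq_some_iff, Option.guard_eq_some_iff,
    decide_eq_true_eq]
  constructor
  · rintro ⟨_, _, b, -, rfl, hb⟩
    exact ⟨b, hb⟩
  · rintro ⟨b, hb⟩
    exact ⟨Encodable.encode b, b, b, Encodable.encodek b, rfl, hb⟩

theorem PrimrecPred.forall_mem' {f : α → List β} {p : α × β → Prop} (hf : Primrec f)
    (hp : PrimrecPred p) : PrimrecPred fun a => ∀ b ∈ f a, p (a, b) :=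
  (PrimrecRel.forall_mem_list (R := fun b a => p (a, b)) (hp.comp (pair snd fst))).comp hf .id

theorem PrimrecPred.forall_lt' {f : α → ℕ} {p : α × ℕ → Prop} (hf : Primrec f)
    (hp : PrimrecPred p) : PrimrecPred fun a => ∀ b < f a, p (a, b) :=
  (forall_mem' (list_range.comp hf) hp).of_eq fun _ => by simp

end Computability

namespace FreeGroup

variable {α : Type*}

theorem reduce_eq_foldr [DecidableEq α] (L : List (α × Bool)) :
    reduce L = L.foldr (fun x acc => if acc.head? = some (x.1, !x.2) then acc.tail else x :: acc)
      [] := by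
  induction L with
  | nil => rfl
  | cons x L ih =>
    rw [reduce.cons, ih, List.foldr_cons]
    rcases L.foldr _ [] with _ | ⟨⟨c, d⟩, acc⟩
    · rfl
    · obtain ⟨a, b⟩ := x
      cases b <;> cases d <;> simp [eq_comm]

theorem mk_eq_mk_iff_reduce_eq [DecidableEq α] {L₁ L₂ : List (α × Bool)} :
    mk L₁ = mk L₂ ↔ reduce L₁ = reduce L₂ :=
  ⟨reduce.sound, reduce.exact⟩

theorem mk_flatten (Ls : List (List (α × Bool))) : mk Ls.flatten = (Ls.map mk).prod := by
  induction Ls with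
  | nil => rfl
  | cons L Ls ih => rw [List.flatten_cons, ← mul_mk, ih, List.map_cons, List.prod_cons]

theorem mk_conj_div (u w v : List (α × Bool)) :
    mk (u ++ w ++ invRev u ++ invRev v) = mk u * mk w * (mk u)⁻¹ / mk v := by
  simp only [div_eq_mul_inv, inv_mk, mul_mk]

end FreeGroup

namespace Primrec

variable {α : Type*} [Primcodable α]

theorem freeGroup_invRev : Primrec (FreeGroup.invRev : List (α × Bool) → List (α × Bool)) :=
  list_reverse.comp <| list_map .id <| pair (fst.comp snd) (Primrec.not.comp (snd.comp snd))

theorem freeGroup_reduce [DecidableEq α] :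
    Primrec (FreeGroup.reduce : List (α × Bool) → List (α × Bool)) := by
  have step : Primrec₂ fun (x : α × Bool) (acc : List (α × Bool)) =>
      if acc.head? = some (x.1, !x.2) then acc.tail else x :: acc :=
    ite (Primrec.eq.comp (list_head?.comp snd)
        (option_some.comp (pair (fst.comp fst) (Primrec.not.comp (snd.comp fst)))))
      (list_tail.comp snd) list_cons
  exact (list_foldr .id (const []) (step.comp (fst.comp snd) (snd.comp snd)).to₂).of_eq
    fun L => (FreeGroup.reduce_eq_foldr L).symm

end Primrec

theorem PresentedGroup.isConj_mk_iff {α : Type*} {rels : Set (FreeGroup α)} {a b : FreeGroup α} :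
    IsConj (mk rels a) (mk rels b) ↔ ∃ u, u * a * u⁻¹ / b ∈ Subgroup.normalClosure rels := by
  rw [isConj_iff, (mk_surjective rels).exists]
  refine exists_congr fun u => ?_
  rw [← map_inv, ← map_mul, ← map_mul]
  exact QuotientGroup.eq_iff_div_mem

section Relators

open FreeGroup
open Subgroup (normalClosure)

variable {α : Type} (R : List (List (α × Bool)))

/-- For `c = (t, j, s)`, the word `t r t⁻¹` if `s` and its inverse otherwise, where `r = R[j]`
(the empty word if `j ≥ R.length`). -/
def conjugateRelator (c : List (α × Bool) × ℕ × Bool) : List (α × Bool) :=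
  let w := c.1 ++ R.getD c.2.1 [] ++ invRev c.1
  cond c.2.2 w (invRev w)

def relatorProduct (L : List (List (α × Bool) × ℕ × Bool)) : List (α × Bool) :=
  L.flatMap (conjugateRelator R)

theorem mk_conjugateRelator (t : List (α × Bool)) (j : ℕ) (s : Bool) :
    mk (conjugateRelator R (t, j, s)) =
      cond s (mk t * mk (R.getD j []) * (mk t)⁻¹) (mk t * mk (R.getD j []) * (mk t)⁻¹)⁻¹ := by
  cases s <;> simp [conjugateRelator, inv_mk, mul_mk]

theorem mk_getD_mem_normalClosure (j : ℕ) : mk (R.getD j []) ∈ normalClosure (relsOf R) := by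
  rcases lt_or_ge j R.length with h | h
  · exact Subgroup.subset_normalClosure ⟨_, List.getD_eq_getElem R [] h ▸ List.getElem_mem h, rfl⟩
  · rw [List.getD_eq_default R [] h]
    exact one_mem _

theorem mk_relatorProduct_mem_normalClosure (L : List (List (α × Bool) × ℕ × Bool)) :
    mk (relatorProduct R L) ∈ normalClosure (relsOf R) := by
  rw [relatorProduct, List.flatMap, mk_flatten, List.map_map]
  refine list_prod_mem fun x hx => ?_
  obtain ⟨⟨t, j, s⟩, -, rfl⟩ := List.mem_map.1 hx
  have hconj := Subgroup.normalClosure_normal.conj_mem _ (mk_getD_mem_normalClosure R j) (mk t)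
  rw [Function.comp_apply, mk_conjugateRelator]
  cases s
  exacts [inv_mem hconj, hconj]

theorem exists_mk_relatorProduct_eq {x : FreeGroup α} (hx : x ∈ normalClosure (relsOf R)) :
    ∃ L, mk (relatorProduct R L) = x := by
  classical
  let M : Submonoid (FreeGroup α) :=
    { carrier := Set.range fun L => mk (relatorProduct R L)
      mul_mem' := by
        rintro _ _ ⟨L₁, rfl⟩ ⟨L₂, rfl⟩
        exact ⟨L₁ ++ L₂, by simp [relatorProduct, mul_mk]⟩
      one_mem' := ⟨[], rfl⟩ }
  have hgen : ∀ y ∈ Group.conjugatesOfSet (relsOf R),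
      ∃ t j, mk (conjugateRelator R (t, j, true)) = y ∧
        mk (conjugateRelator R (t, j, false)) = y⁻¹ := by
    intro y hy
    obtain ⟨_, ⟨r, hr, rfl⟩, hconj⟩ := Group.mem_conjugatesOfSet_iff.1 hy
    obtain ⟨c, rfl⟩ := isConj_iff.1 hconj
    obtain ⟨j, hj, rfl⟩ := List.getElem_of_mem hr
    refine ⟨c.toWord, j, ?_, ?_⟩ <;>
      simp only [mk_conjugateRelator, List.getD_eq_getElem R [] hj, mk_toWord, cond_true,
        cond_false]
  have hsub : Group.conjugatesOfSet (relsOf R) ∪ (Group.conjugatesOfSet (relsOf R))⁻¹ ⊆ M := by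
    rintro y (hy | hy)
    · obtain ⟨t, j, h, -⟩ := hgen y hy
      exact ⟨[(t, j, true)], by simpa [relatorProduct] using h⟩
    · obtain ⟨t, j, -, h⟩ := hgen y⁻¹ hy
      exact ⟨[(t, j, false)], by simpa [relatorProduct] using h⟩
  refine Submonoid.closure_le.2 hsub ?_
  rw [← Subgroup.closure_toSubmonoid]
  exact hx

theorem isConj_wordElt_iff [DecidableEq α] {w v : List (α × Bool)} :
    IsConj (wordElt R w) (wordElt R v) ↔
      ∃ u L, reduce (u ++ w ++ invRev u ++ invRev v) = reduce (relatorProduct R L) := by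
  rw [wordElt, wordElt, PresentedGroup.isConj_mk_iff]
  constructor
  · rintro ⟨u, hu⟩
    obtain ⟨L, hL⟩ := exists_mk_relatorProduct_eq R hu
    refine ⟨u.toWord, L, mk_eq_mk_iff_reduce_eq.1 ?_⟩
    rw [hL, mk_conj_div, mk_toWord]
  · rintro ⟨u, L, h⟩
    refine ⟨mk u, ?_⟩
    rw [← mk_conj_div, mk_eq_mk_iff_reduce_eq.2 h]
    exact mk_relatorProduct_mem_normalClosure R L

variable [Primcodable α]

theorem primrec_conjugateRelator : Primrec (conjugateRelator R) := by
  have hw : Primrec fun c : List (α × Bool) × ℕ × Bool =>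
      c.1 ++ R.getD c.2.1 [] ++ invRev c.1 :=
    list_append.comp (list_append.comp fst ((list_getD []).comp (const R) (fst.comp snd)))
      (freeGroup_invRev.comp fst)
  exact cond (snd.comp snd) hw (freeGroup_invRev.comp hw)

theorem primrec_relatorProduct : Primrec (relatorProduct R) :=
  list_flatMap .id ((primrec_conjugateRelator R).comp snd).to₂

theorem rePred_isConj_wordElt [DecidableEq α] :
    REPred fun p : List (α × Bool) × List (α × Bool) => IsConj (wordElt R p.1) (wordElt R p.2) := by
  have hcert : PrimrecRel fun (p : List (α × Bool) × List (α × Bool))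
      (c : List (α × Bool) × List (List (α × Bool) × ℕ × Bool)) =>
      reduce (c.1 ++ p.1 ++ invRev c.1 ++ invRev p.2) = reduce (relatorProduct R c.2) := by
    refine Primrec.eq.comp (freeGroup_reduce.comp ?_)
      (freeGroup_reduce.comp ((primrec_relatorProduct R).comp (snd.comp snd)))
    exact list_append.comp (list_append.comp (list_append.comp (fst.comp snd) (fst.comp fst))
      (freeGroup_invRev.comp (fst.comp snd))) (freeGroup_invRev.comp (snd.comp fst))
  exact (REPred.exists_of_primrecRel hcert).of_eq fun p => by
    rw [isConj_wordElt_iff, Prod.exists]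

end Relators

theorem isConj_iff_exists_mul_eq_mul {G : Type*} [Group G] {a b : G} :
    IsConj a b ↔ ∃ u, a * u = u * b := by
  rw [isConj_iff]
  exact ⟨fun ⟨c, hc⟩ => ⟨c⁻¹, by rw [← hc]; group⟩,
    fun ⟨u, hu⟩ => ⟨u⁻¹, by rw [inv_inv, mul_assoc, hu]; group⟩⟩

theorem List.getD_ofFn {β : Type*} {m : ℕ} (F : Fin m → β) (d : β) (i : Fin m) :
    (List.ofFn F).getD i d = F i := by
  rw [List.getD_eq_getElem _ _ (by simp), List.getElem_ofFn]

section GroupTable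

/-- A finite group on `{0, …, T.length - 1}` is encoded by its multiplication table `T`
(`a * b` is entry `b` of row `a`), its table of inverses `I` and its identity `e`. -/
def tableMul (T : List (List ℕ)) (a b : ℕ) : ℕ := (T.getD a []).getD b 0

/-- The left-handed axioms suffice, by `Group.ofLeftAxioms`. -/
structure IsGroupTable (T : List (List ℕ)) (I : List ℕ) (e : ℕ) : Prop where
  one_lt : e < T.length
  mul_lt : ∀ a < T.length, ∀ b < T.length, tableMul T a b < T.length
  mul_assoc : ∀ a < T.length, ∀ b < T.length, ∀ c < T.length,
    tableMul T (tableMul T a b) c = tableMul T a (tableMul T b c)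
  one_mul : ∀ a < T.length, tableMul T e a = a
  inv_lt : ∀ a < T.length, I.getD a 0 < T.length
  inv_mul : ∀ a < T.length, tableMul T (I.getD a 0) a = e

/-- A copy of `Fin T.length` that does not inherit the modular arithmetic of `Fin`. -/
def TableGroup (T : List (List ℕ)) : Type := Fin T.length

variable {T : List (List ℕ)} {I : List ℕ} {e : ℕ}

abbrev IsGroupTable.group (h : IsGroupTable T I e) : Group (TableGroup T) :=
  letI : Mul (TableGroup T) := ⟨fun a b => ⟨tableMul T a.1 b.1, h.mul_lt _ a.2 _ b.2⟩⟩
  letI : One (TableGroup T) := ⟨⟨e, h.one_lt⟩⟩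
  letI : Inv (TableGroup T) := ⟨fun a => ⟨I.getD a.1 0, h.inv_lt _ a.2⟩⟩
  Group.ofLeftAxioms (fun a b c => Fin.ext (h.mul_assoc _ a.2 _ b.2 _ c.2))
    (fun a => Fin.ext (h.one_mul _ a.2)) (fun a => Fin.ext (h.inv_mul _ a.2))

def letterValue {n : ℕ} (I g : List ℕ) (x : Fin n × Bool) : ℕ :=
  cond x.2 (g.getD x.1 0) (I.getD (g.getD x.1 0) 0)

def evalWord {n : ℕ} (T : List (List ℕ)) (I g : List ℕ) (e : ℕ) (w : List (Fin n × Bool)) : ℕ :=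
  w.foldl (fun s x => tableMul T s (letterValue I g x)) e

theorem evalWord_eq {n : ℕ} {g : List ℕ} {G : Type*} [Group G] (ι : G → ℕ)
    (φ : FreeGroup (Fin n) →* G) (hmul : ∀ a b, tableMul T (ι a) (ι b) = ι (a * b))
    (hinv : ∀ a, I.getD (ι a) 0 = ι a⁻¹) (hone : ι 1 = e)
    (hgen : ∀ i : Fin n, g.getD i 0 = ι (φ (FreeGroup.of i))) (w : List (Fin n × Bool)) :
    evalWord T I g e w = ι (φ (FreeGroup.mk w)) := by
  suffices h : ∀ x, w.foldl (fun s x => tableMul T s (letterValue I g x)) (ι x) =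
      ι (x * φ (FreeGroup.mk w)) by
    simpa only [evalWord, one_mul, hone] using h 1
  have hletter : ∀ y, letterValue I g y = ι (φ (FreeGroup.mk [y])) := by
    rintro ⟨i, _ | _⟩
    · rw [letterValue, cond_false, hgen, hinv, ← map_inv]
      rfl
    · rw [letterValue, cond_true, hgen]
      rfl
  induction w with
  | nil => intro x; rw [List.foldl_nil, ← FreeGroup.one_eq_mk, map_one, mul_one]
  | cons y w ih =>
    intro x
    rw [List.foldl_cons, hletter, hmul, ih, mul_assoc, ← map_mul, FreeGroup.mul_mk,
      List.singleton_append]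

end GroupTable

section TableOfFiniteGroup

variable {Q : Type*} [Group Q] {m : ℕ} (ε : Q ≃ Fin m)

def mulTable : List (List ℕ) :=
  List.ofFn fun a => List.ofFn fun b => (ε (ε.symm a * ε.symm b) : ℕ)

def invTable : List ℕ := List.ofFn fun a => (ε (ε.symm a)⁻¹ : ℕ)

theorem forall_lt_length_mulTable {P : ℕ → Prop} :
    (∀ a < (mulTable ε).length, P a) ↔ ∀ q, P (ε q) := by
  rw [mulTable, List.length_ofFn]
  exact ⟨fun h q => h _ (ε q).2, fun h a ha => by simpa using h (ε.symm ⟨a, ha⟩)⟩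

theorem tableMul_mulTable (a b : Q) : tableMul (mulTable ε) (ε a) (ε b) = ε (a * b) := by
  simp only [tableMul, mulTable, List.getD_ofFn, Equiv.symm_apply_apply]

theorem getD_invTable (a : Q) : (invTable ε).getD (ε a) 0 = ε a⁻¹ := by
  simp only [invTable, List.getD_ofFn, Equiv.symm_apply_apply]

theorem isGroupTable_mulTable : IsGroupTable (mulTable ε) (invTable ε) (ε 1) where
  one_lt := by simp [mulTable]
  mul_lt := by simp only [forall_lt_length_mulTable, tableMul_mulTable]; simp [mulTable]
  mul_assoc := by simp only [forall_lt_length_mulTable, tableMul_mulTable, mul_assoc, implies_true]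
  one_mul := by simp only [forall_lt_length_mulTable, tableMul_mulTable, one_mul, implies_true]
  inv_lt := by simp only [forall_lt_length_mulTable, getD_invTable]; simp [mulTable]
  inv_mul := by
    simp only [forall_lt_length_mulTable, getD_invTable, tableMul_mulTable, inv_mul_cancel,
      implies_true]

end TableOfFiniteGroup

section TableComputability

open PrimrecPred (forall_lt')

variable {δ : Type*} [Primcodable δ]

theorem primrec_tableMul {T : δ → List (List ℕ)} {a b : δ → ℕ} (hT : Primrec T) (ha : Primrec a)
    (hb : Primrec b) : Primrec fun x => tableMul (T x) (a x) (b x) :=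
  (list_getD 0).comp ((list_getD []).comp hT ha) hb

theorem primrec_evalWord {n : ℕ} {T : δ → List (List ℕ)} {I g : δ → List ℕ} {e : δ → ℕ}
    {w : δ → List (Fin n × Bool)} (hT : Primrec T) (hI : Primrec I) (hg : Primrec g)
    (he : Primrec e) (hw : Primrec w) :
    Primrec fun x => evalWord (T x) (I x) (g x) (e x) (w x) := by
  have hgen : Primrec fun y : δ × ℕ × (Fin n × Bool) => (g y.1).getD y.2.2.1 0 :=
    (list_getD 0).comp (hg.comp fst) (fin_val.comp (fst.comp (snd.comp snd)))
  have hletter : Primrec fun y : δ × ℕ × (Fin n × Bool) => letterValue (I y.1) (g y.1) y.2.2 :=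
    cond (snd.comp (snd.comp snd)) hgen ((list_getD 0).comp (hI.comp fst) hgen)
  exact list_foldl hw he (primrec_tableMul (hT.comp fst) (fst.comp snd) hletter).to₂

theorem primrecPred_isGroupTable :
    PrimrecPred fun d : List (List ℕ) × List ℕ × ℕ => IsGroupTable d.1 d.2.1 d.2.2 := by
  have hT : Primrec fun d : List (List ℕ) × List ℕ × ℕ => d.1 := fst
  have hlen := list_length.comp hT
  have one_lt := nat_lt.comp (snd.comp snd) hlen
  have mul_lt := forall_lt' hlen <| forall_lt' (hlen.comp fst) <|
    nat_lt.comp (primrec_tableMul (hT.comp (fst.comp fst)) (snd.comp fst) snd)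
      (hlen.comp (fst.comp fst))
  have mul_assoc := forall_lt' hlen <| forall_lt' (hlen.comp fst) <|
    forall_lt' (hlen.comp (fst.comp fst)) <| Primrec.eq.comp
      (primrec_tableMul (hT.comp (fst.comp (fst.comp fst)))
        (primrec_tableMul (hT.comp (fst.comp (fst.comp fst))) (snd.comp (fst.comp fst))
          (snd.comp fst)) snd)
      (primrec_tableMul (hT.comp (fst.comp (fst.comp fst))) (snd.comp (fst.comp fst))
        (primrec_tableMul (hT.comp (fst.comp (fst.comp fst))) (snd.comp fst) snd))
  have one_mul := forall_lt' hlen <|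
    Primrec.eq.comp (primrec_tableMul (hT.comp fst) (snd.comp (snd.comp fst)) snd) snd
  have hinv : Primrec fun x : (List (List ℕ) × List ℕ × ℕ) × ℕ => x.1.2.1.getD x.2 0 :=
    (list_getD 0).comp (fst.comp (snd.comp fst)) snd
  have inv_lt := forall_lt' hlen <| nat_lt.comp hinv (hlen.comp fst)
  have inv_mul := forall_lt' hlen <|
    Primrec.eq.comp (primrec_tableMul (hT.comp fst) hinv snd) (snd.comp (snd.comp fst))
  exact (one_lt.and <| mul_lt.and <| mul_assoc.and <| one_mul.and <| inv_lt.and inv_mul).of_eq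
    fun _ => ⟨fun ⟨h₁, h₂, h₃, h₄, h₅, h₆⟩ => ⟨h₁, h₂, h₃, h₄, h₅, h₆⟩,
      fun ⟨h₁, h₂, h₃, h₄, h₅, h₆⟩ => ⟨h₁, h₂, h₃, h₄, h₅, h₆⟩⟩

end TableComputability

section SeparatingTable

open PrimrecPred (forall_lt' forall_mem')

variable {n : ℕ} (R : List (List (Fin n × Bool)))

structure IsSeparatingTable (w v : List (Fin n × Bool)) (T : List (List ℕ)) (I : List ℕ) (e : ℕ)
    (g : List ℕ) : Prop where
  isGroupTable : IsGroupTable T I e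
  gen_lt : ∀ i < n, g.getD i 0 < T.length
  evalWord_rel : ∀ r ∈ R, evalWord T I g e r = e
  not_semiconj : ∀ u < T.length,
    tableMul T (evalWord T I g e w) u ≠ tableMul T u (evalWord T I g e v)

theorem primrecRel_isSeparatingTable :
    PrimrecRel fun (p : List (Fin n × Bool) × List (Fin n × Bool))
      (d : List (List ℕ) × List ℕ × ℕ × List ℕ) =>
      IsSeparatingTable R p.1 p.2 d.1 d.2.1 d.2.2.1 d.2.2.2 := by
  have hd : Primrec fun x : (List (Fin n × Bool) × List (Fin n × Bool)) ×
      (List (List ℕ) × List ℕ × ℕ × List ℕ) => x.2 := snd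
  have hT := fst.comp hd
  have hI := fst.comp (snd.comp hd)
  have he := fst.comp (snd.comp (snd.comp hd))
  have hg := snd.comp (snd.comp (snd.comp hd))
  have hlen := list_length.comp hT
  have isGroupTable := primrecPred_isGroupTable.comp (pair hT (pair hI he))
  have gen_lt := forall_lt' (const n) <|
    nat_lt.comp ((list_getD 0).comp (hg.comp fst) snd) (hlen.comp fst)
  have evalWord_rel := forall_mem' (const R) <| Primrec.eq.comp
    (primrec_evalWord (hT.comp fst) (hI.comp fst) (hg.comp fst) (he.comp fst) snd) (he.comp fst)
  have not_semiconj := forall_lt' hlen <| PrimrecPred.not <| Primrec.eq.comp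
    (primrec_tableMul (hT.comp fst) (primrec_evalWord (hT.comp fst) (hI.comp fst) (hg.comp fst)
      (he.comp fst) (fst.comp (fst.comp fst))) snd)
    (primrec_tableMul (hT.comp fst) snd (primrec_evalWord (hT.comp fst) (hI.comp fst)
      (hg.comp fst) (he.comp fst) (snd.comp (fst.comp fst))))
  exact (isGroupTable.and <| gen_lt.and <| evalWord_rel.and not_semiconj).of_eq
    fun _ => ⟨fun ⟨h₁, h₂, h₃, h₄⟩ => ⟨h₁, h₂, h₃, h₄⟩, fun ⟨h₁, h₂, h₃, h₄⟩ => ⟨h₁, h₂, h₃, h₄⟩⟩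

variable {R}

theorem not_isConj_of_isSeparatingTable {w v : List (Fin n × Bool)} {T : List (List ℕ)}
    {I : List ℕ} {e : ℕ} {g : List ℕ} (h : IsSeparatingTable R w v T I e g) :
    ¬ IsConj (wordElt R w) (wordElt R v) := by
  let := h.isGroupTable.group
  let f : Fin n → TableGroup T := fun i => ⟨g.getD i 0, h.gen_lt i i.2⟩
  have heval (w) : evalWord T I g e w = Fin.val (FreeGroup.lift f (FreeGroup.mk w)) :=
    evalWord_eq (G := TableGroup T) Fin.val (FreeGroup.lift f) (fun _ _ => rfl) (fun _ => rfl) rfl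
      (fun i => by rw [FreeGroup.lift_apply_of]) w
  have hrels : ∀ r ∈ relsOf R, FreeGroup.lift f r = 1 := by
    rintro _ ⟨r, hr, rfl⟩
    exact Fin.ext ((heval r).symm.trans (h.evalWord_rel r hr))
  intro hconj
  obtain ⟨u, hu⟩ :=
    isConj_iff_exists_mul_eq_mul.1 ((PresentedGroup.toGroup hrels).map_isConj hconj)
  refine h.not_semiconj (Fin.val u) (Fin.isLt u) ?_
  rw [heval, heval]
  exact congrArg Fin.val hu

theorem exists_isSeparatingTable {w v : List (Fin n × Bool)} {Q : Type*} [Group Q] [Finite Q]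
    (f : PresentedGroup (relsOf R) →* Q) (hf : ¬ IsConj (f (wordElt R w)) (f (wordElt R v))) :
    ∃ T I e g, IsSeparatingTable R w v T I e g := by
  obtain ⟨m, ⟨ε⟩⟩ := Finite.exists_equiv_fin Q
  let φ := f.comp (PresentedGroup.mk (relsOf R))
  let g := List.ofFn fun i : Fin n => (ε (φ (FreeGroup.of i)) : ℕ)
  have heval (w) : evalWord (mulTable ε) (invTable ε) g (ε 1) w = ε (φ (FreeGroup.mk w)) :=
    evalWord_eq (fun q => (ε q : ℕ)) φ (tableMul_mulTable ε) (getD_invTable ε) rfl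
      (fun i => List.getD_ofFn _ _ i) w
  refine ⟨mulTable ε, invTable ε, ε 1, g, isGroupTable_mulTable ε, fun i hi => ?_,
    fun r hr => ?_, ?_⟩
  · rw [show g.getD i _ = _ from List.getD_ofFn _ _ ⟨i, hi⟩, mulTable, List.length_ofFn]
    exact Fin.isLt _
  · have hrel : PresentedGroup.mk (relsOf R) (FreeGroup.mk r) = 1 :=
      (QuotientGroup.eq_one_iff _).2 (Subgroup.subset_normalClosure ⟨r, hr, rfl⟩)
    rw [heval, MonoidHom.comp_apply, hrel, map_one]
  · rw [forall_lt_length_mulTable]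
    intro q hq
    rw [heval, heval, tableMul_mulTable, tableMul_mulTable] at hq
    exact hf (isConj_iff_exists_mul_eq_mul.2 ⟨q, ε.injective (Fin.ext hq)⟩)

end SeparatingTable

def IsConjugacySeparable (G : Type*) [Group G] : Prop :=
  ∀ g h : G, ¬ IsConj g h →
    ∃ (Q : Type) (_ : Group Q) (_ : Finite Q) (f : G →* Q), ¬ IsConj (f g) (f h)

theorem rePred_not_isConj_wordElt {n : ℕ} (R : List (List (Fin n × Bool)))
    (hsep : IsConjugacySeparable (PresentedGroup (relsOf R))) :
    REPred fun p : List (Fin n × Bool) × List (Fin n × Bool) =>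
      ¬ IsConj (wordElt R p.1) (wordElt R p.2) := by
  refine (REPred.exists_of_primrecRel (primrecRel_isSeparatingTable R)).of_eq fun p => ⟨?_, ?_⟩
  · rintro ⟨d, hd⟩
    exact not_isConj_of_isSeparatingTable hd
  · intro hp
    obtain ⟨Q, _, _, f, hf⟩ := hsep _ _ hp
    obtain ⟨T, I, e, g, h⟩ := exists_isSeparatingTable f hf
    exact ⟨(T, I, e, g), h⟩

/-- If the finitely presented group `PresentedGroup (relsOf R)` is conjugacy separable, then
the conjugacy problem for this presentation is decidable. -/
theorem conjugacy_problem_solvable_of_conjugacy_separable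
    (n : ℕ) (R : List (List (Fin n × Bool)))
    (hconj : ∀ g h : PresentedGroup (relsOf R), ¬ IsConj g h →
      ∃ (Q : Type) (_ : Group Q) (_ : Finite Q) (f : PresentedGroup (relsOf R) →* Q),
        ¬ IsConj (f g) (f h)) :
    ComputablePred fun p : List (Fin n × Bool) × List (Fin n × Bool) =>
      IsConj (wordElt R p.1) (wordElt R p.2) :=
  ComputablePred.computable_iff_re_compl_re'.2
    ⟨rePred_isConj_wordElt R, rePred_not_isConj_wordElt R hconj⟩
end

section
/- Let n : ℕ and let R be a finite list of words in n generators, and let G be the finitely presented group PresentedGroup S, where S ⊆ FreeGroup (Fin n) is the set of elements determined by R. If G is subgroup separable, then the uniform membership problem for this presentation is decidable: the predicate on pairs (X, w), where X is a list of words and w is a word, asserting that the element of G represented by w lies in Subgroup.closure of the set of elements of G represented by the words in X, satisfies ComputablePred. -/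
/-- A subset `T` of a group `G` is separable if every `g ∉ T` can be separated from `T`
in some finite quotient. -/
def SubsetSeparable (G : Type) [Group G] (T : Set G) : Prop :=
  ∀ g ∉ T, ∃ (Q : Type) (_ : Group Q) (_ : Finite Q) (f : G →* Q), f g ∉ f '' T

/-- A group is subgroup separable if every finitely generated subgroup is separable. -/
def SubgroupSeparable (G : Type) [Group G] : Prop :=
  ∀ H : Subgroup G, H.FG → SubsetSeparable G (H : Set G)

/-!
Membership is semi-decidable: `w` represents an element of `⟨X⟩` exactly when, in the free
group, `w` equals a product of words of `X`, conjugates of relators and inverses of these, and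
such an equality can be verified by free reduction. Non-membership is semi-decidable as soon as
the group is subgroup separable: a finite quotient separating `w` from `⟨X⟩` becomes, through
the Cayley embedding, a permutation representation on `{0, …, m-1}`, and the tables of the
generators together with the finite list of tables of the image of `⟨X⟩` form a certificate
whose validity is a primitive recursive check. A predicate that is both r.e. and co-r.e. is
computable (Post).
-/

section Computability

open Primrec

theorem PrimrecRel.exists_re {α β : Type*} [Primcodable α] [Primcodable β]
    {q : α → β → Prop} (hq : PrimrecRel q) : REPred fun a => ∃ b, q a b := by
  classical
  have hsearch : Computable₂ fun (a : α) (k : ℕ) =>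
      (Encodable.decode (α := β) k).bind fun b => if q a b then some b else none :=
    (option_bind (Primrec.decode.comp snd)
      (Primrec.ite (hq.comp (fst.comp fst) snd) (option_some.comp snd) (const none)).to₂).to_comp
  refine (Partrec.rfindOpt hsearch).dom_re.of_eq fun a => ?_
  rw [Nat.rfindOpt_dom]
  constructor
  · rintro ⟨k, b, hb⟩
    simp only [Option.mem_def, Option.bind_eq_some_iff, Option.ite_none_right_eq_some] at hb
    obtain ⟨c, -, hc, -⟩ := hb
    exact ⟨c, hc⟩
  · rintro ⟨b, hb⟩
    exact ⟨Encodable.encode b, b, by simp [hb]⟩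

theorem PrimrecRel.mem {α : Type*} [Primcodable α] :
    PrimrecRel fun (a : α) (l : List α) => a ∈ l :=
  ((PrimrecRel.exists_mem_list Primrec.eq).comp snd fst).of_eq fun p => by simp

end Computability

theorem List.getD_mem_or_eq_default {α : Type*} (l : List α) (i : ℕ) (d : α) :
    l.getD i d ∈ l ∨ l.getD i d = d := by
  rw [List.getD_eq_getElem?_getD]
  cases h : l[i]? with
  | none => exact Or.inr rfl
  | some b => exact Or.inl (List.mem_of_getElem? h)

theorem exists_injective_hom_perm_nat (Q : Type*) [Group Q] [Finite Q] :
    ∃ (m : ℕ) (κ : Q →* Equiv.Perm ℕ), Function.Injective κ ∧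
      ∀ q j, m ≤ j → κ q j = j := by
  obtain ⟨m, ⟨e⟩⟩ := Finite.exists_equiv_fin Q
  let e' : Q ≃ {j // j < m} := e.trans Fin.equivSubtype
  exact ⟨m, (Equiv.Perm.extendDomainHom e').comp (MulAction.toPermHom Q Q),
    (Equiv.Perm.extendDomainHom_injective e').comp MulAction.toPerm_injective,
    fun q j hj => Equiv.Perm.extendDomain_apply_not_subtype _ _ (not_lt.mpr hj)⟩

namespace FreeGroup

variable {α ι : Type*}

def substWord (s : ι → List (α × Bool)) (L : List (ι × Bool)) : List (α × Bool) :=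
  L.flatMap fun p => bif p.2 then s p.1 else invRev (s p.1)

theorem mk_substWord (s : ι → List (α × Bool)) (L : List (ι × Bool)) :
    mk (substWord s L) = lift (fun i => mk (s i)) (mk L) := by
  rw [lift_mk]
  induction L with
  | nil => rfl
  | cons p L ih =>
    obtain ⟨i, _ | _⟩ := p <;> simp [substWord, ← mul_mk, ← inv_mk, ← ih]

section Computability

open Primrec

variable [Primcodable α]

theorem primrec_invRev : Primrec (invRev : List (α × Bool) → List (α × Bool)) :=
  list_reverse.comp <|
    list_map .id (Primrec.pair (fst.comp snd) (Primrec.not.comp (snd.comp snd))).to₂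

theorem primrec_reduce [DecidableEq α] :
    Primrec (reduce : List (α × Bool) → List (α × Bool)) := by
  let step (p : (α × Bool) × List (α × Bool)) (q : (α × Bool) × List (α × Bool)) :=
    if p.1.1 = q.1.1 ∧ p.1.2 = !q.1.2 then q.2 else p.1 :: q.1 :: q.2
  -- `step` is the recursion step in the definition of `reduce`, so the final `of_eq` is `rfl`.
  have hstep : Primrec₂ step :=
    (Primrec.ite ((Primrec.eq.comp (fst.comp (fst.comp fst)) (fst.comp (fst.comp snd))).and
      (Primrec.eq.comp (snd.comp (fst.comp fst)) (Primrec.not.comp (snd.comp (fst.comp snd)))))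
      (snd.comp snd)
      (list_cons.comp (fst.comp fst) (list_cons.comp (fst.comp snd) (snd.comp snd)))).to₂
  have hsingleton : Primrec fun p : (α × Bool) × List (α × Bool) => [p.1] :=
    list_cons.comp fst (const [])
  have hcons : Primrec fun p : (α × Bool) × List (α × Bool) =>
      List.casesOn (motive := fun _ => List (α × Bool)) p.2 [p.1] fun hd tl => step p (hd, tl) :=
    list_casesOn (f := fun p => p.2) (g := fun p => [p.1]) (h := fun p q => step p q)
      snd hsingleton hstep
  exact (list_rec (h := fun _ p => List.casesOn (motive := fun _ => List (α × Bool)) p.2.2 [p.1]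
      fun hd tl => step (p.1, p.2.2) (hd, tl)) .id (const [])
    (hcons.comp (Primrec.pair (fst.comp snd) (snd.comp (snd.comp snd)))).to₂).of_eq fun L => rfl

theorem primrec_substWord {σ : Type*} [Primcodable ι] [Primcodable σ]
    {s : σ → ι → List (α × Bool)} (hs : Primrec₂ s) :
    Primrec₂ fun a L => substWord (s a) L :=
  list_flatMap snd (Primrec.cond (snd.comp snd) (hs.comp (fst.comp fst) (fst.comp snd))
    (primrec_invRev.comp (hs.comp (fst.comp fst) (fst.comp snd)))).to₂

end Computability

end FreeGroup

namespace MembershipProblem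

open FreeGroup (substWord)
open Primrec

abbrev Word (n : ℕ) := List (Fin n × Bool)

variable {n : ℕ}

theorem wordElt_surjective (R : List (Word n)) : Function.Surjective (wordElt R) := fun y => by
  obtain ⟨x, rfl⟩ := PresentedGroup.mk_surjective _ y
  exact ⟨x.toWord, by rw [wordElt, FreeGroup.mk_toWord]⟩

theorem wordElt_append (R : List (Word n)) (u v : Word n) :
    wordElt R (u ++ v) = wordElt R u * wordElt R v := by
  rw [wordElt, wordElt, wordElt, ← map_mul, FreeGroup.mul_mk]

theorem wordElt_invRev (R : List (Word n)) (u : Word n) :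
    wordElt R (FreeGroup.invRev u) = (wordElt R u)⁻¹ := by
  rw [wordElt, wordElt, ← map_inv, FreeGroup.inv_mk]

/-- `inl i` stands for the `i`-th word of `X` and `inr (v, j)` for the conjugate of the `j`-th
relator by `v`; out-of-range indices give the empty word. -/
def generatorWord (R X : List (Word n)) : ℕ ⊕ (Word n × ℕ) → Word n :=
  Sum.elim (fun i => X.getD i []) fun p => p.1 ++ R.getD p.2 [] ++ FreeGroup.invRev p.1

theorem closure_sup_normalClosure_eq_closure_range (R X : List (Word n)) :
    Subgroup.closure {x | ∃ u ∈ X, x = FreeGroup.mk u} ⊔ Subgroup.normalClosure (relsOf R) =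
      Subgroup.closure (Set.range fun i => FreeGroup.mk (generatorWord R X i)) := by
  apply le_antisymm
  · rw [Subgroup.normalClosure, ← Subgroup.closure_union, Subgroup.closure_le]
    rintro _ (⟨u, hu, rfl⟩ | hx)
    · obtain ⟨i, hi, rfl⟩ := List.getElem_of_mem hu
      exact Subgroup.subset_closure ⟨.inl i, by simp [generatorWord, hi]⟩
    · obtain ⟨_, ⟨r, hr, rfl⟩, hconj⟩ := Group.mem_conjugatesOfSet_iff.mp hx
      obtain ⟨c, rfl⟩ := isConj_iff.mp hconj
      obtain ⟨j, hj, rfl⟩ := List.getElem_of_mem hr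
      refine Subgroup.subset_closure ⟨.inr (c.toWord, j), ?_⟩
      simp [generatorWord, hj, ← FreeGroup.mul_mk, ← FreeGroup.inv_mk, FreeGroup.mk_toWord,
        mul_assoc]
  · rw [Subgroup.closure_le]
    rintro _ ⟨i | ⟨v, j⟩, rfl⟩
    · refine Subgroup.mem_sup_left ?_
      rcases List.getD_mem_or_eq_default X i [] with h | h
      · exact Subgroup.subset_closure ⟨_, h, rfl⟩
      · simp only [generatorWord, Sum.elim_inl, h, ← FreeGroup.one_eq_mk, one_mem]
    · refine Subgroup.mem_sup_right ?_
      have hr : FreeGroup.mk (R.getD j []) ∈ Subgroup.normalClosure (relsOf R) := by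
        rcases List.getD_mem_or_eq_default R j [] with h | h
        · exact Subgroup.subset_normalClosure ⟨_, h, rfl⟩
        · simp only [h, ← FreeGroup.one_eq_mk, one_mem]
      simpa [generatorWord, ← FreeGroup.mul_mk, ← FreeGroup.inv_mk, mul_assoc] using
        (Subgroup.normalClosure_normal).conj_mem _ hr (FreeGroup.mk v)

theorem wordElt_mem_closure_iff_mem_range_lift (R X : List (Word n)) (w : Word n) :
    wordElt R w ∈ Subgroup.closure {x | ∃ u ∈ X, x = wordElt R u} ↔
      FreeGroup.mk w ∈ (FreeGroup.lift fun i => FreeGroup.mk (generatorWord R X i)).range := by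
  have himage : {x | ∃ u ∈ X, x = wordElt R u} =
      PresentedGroup.mk (relsOf R) '' {x | ∃ u ∈ X, x = FreeGroup.mk u} := by
    ext; simp [wordElt, eq_comm]
  rw [himage, ← MonoidHom.map_closure, wordElt, ← Subgroup.mem_comap, Subgroup.comap_map_eq,
    FreeGroup.range_lift_eq_closure, ← closure_sup_normalClosure_eq_closure_range]
  have hker : (PresentedGroup.mk (relsOf R)).ker = Subgroup.normalClosure (relsOf R) :=
    QuotientGroup.ker_mk' _
  rw [hker]

def IsMembershipCert (R X : List (Word n)) (w : Word n)
    (L : List ((ℕ ⊕ (Word n × ℕ)) × Bool)) : Prop :=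
  FreeGroup.reduce w = FreeGroup.reduce (substWord (generatorWord R X) L)

theorem wordElt_mem_closure_iff_exists_isMembershipCert (R X : List (Word n)) (w : Word n) :
    wordElt R w ∈ Subgroup.closure {x | ∃ u ∈ X, x = wordElt R u} ↔
      ∃ L, IsMembershipCert R X w L := by
  rw [wordElt_mem_closure_iff_mem_range_lift]
  constructor
  · rintro ⟨a, ha⟩
    refine ⟨a.toWord, FreeGroup.reduce.sound ?_⟩
    rw [FreeGroup.mk_substWord, FreeGroup.mk_toWord, ha]
  · rintro ⟨L, hL⟩
    exact ⟨FreeGroup.mk L, by rw [← FreeGroup.mk_substWord, FreeGroup.reduce.exact hL]⟩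

theorem primrecRel_isMembershipCert (R : List (Word n)) :
    PrimrecRel fun (p : List (Word n) × Word n) L => IsMembershipCert R p.1 p.2 L := by
  have hgen : Primrec₂ (generatorWord R) :=
    sumCasesOn snd ((list_getD []).comp (fst.comp fst) snd).to₂
      (list_append.comp (list_append.comp (fst.comp snd)
        ((list_getD []).comp (const R) (snd.comp snd)))
        (FreeGroup.primrec_invRev.comp (fst.comp snd))).to₂
  exact Primrec.eq.comp (FreeGroup.primrec_reduce.comp (snd.comp fst))
    (FreeGroup.primrec_reduce.comp ((FreeGroup.primrec_substWord hgen).comp (fst.comp fst) snd))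

/-- A permutation of `ℕ` fixing every `j ≥ m` is stored as its table `[σ 0, …, σ (m-1)]`. -/
def tableOf (m : ℕ) (f : ℕ → ℕ) : List ℕ := (List.range m).map f

def ofTable (t : List ℕ) (j : ℕ) : ℕ := t[j]?.getD j

theorem ofTable_tableOf {m : ℕ} {f : ℕ → ℕ} (hf : ∀ j, m ≤ j → f j = j) :
    ofTable (tableOf m f) = f := by
  funext j
  rcases lt_or_ge j m with h | h
  · simp [ofTable, tableOf, h]
  · simp [ofTable, tableOf, h, hf j h]

theorem ofTable_eq_self {t : List ℕ} {m j : ℕ} (ht : t.length ≤ m) (hj : m ≤ j) :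
    ofTable t j = j := by
  simp [ofTable, List.getElem?_eq_none (ht.trans hj)]

theorem eq_of_tableOf_eq {m : ℕ} {f g : ℕ → ℕ} (hf : ∀ j, m ≤ j → f j = j)
    (hg : ∀ j, m ≤ j → g j = j) (h : tableOf m f = tableOf m g) : f = g := by
  rw [← ofTable_tableOf hf, h, ofTable_tableOf hg]

def letterTable (gens : List (List ℕ × List ℕ)) (l : Fin n × Bool) : List ℕ :=
  bif l.2 then (gens.getD l.1 ([], [])).1 else (gens.getD l.1 ([], [])).2

def wordAction (gens : List (List ℕ × List ℕ)) (w : Word n) (j : ℕ) : ℕ :=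
  w.foldr (fun l j => ofTable (letterTable gens l) j) j

def cancelWords (n : ℕ) : List (Word n) :=
  (List.finRange n).flatMap fun x => [[(x, true), (x, false)], [(x, false), (x, true)]]

/-- For each generator, `gens` holds its table and the table of its inverse; the words of
`cancelWords` force the two to be mutually inverse permutations. -/
def IsPermRep (R : List (Word n)) (m : ℕ) (gens : List (List ℕ × List ℕ)) : Prop :=
  (∀ p ∈ gens, p.1.length ≤ m ∧ p.2.length ≤ m) ∧
  ∀ r ∈ R ++ cancelWords n, tableOf m (wordAction gens r) = tableOf m id

/-- `C` stands for the set of tables of the image of the subgroup generated by `X`. -/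
def IsNonMembershipCert (R X : List (Word n)) (w : Word n) (m : ℕ)
    (gens : List (List ℕ × List ℕ)) (C : List (List ℕ)) : Prop :=
  IsPermRep R m gens ∧ tableOf m id ∈ C ∧
  (∀ t ∈ C, ∀ u ∈ X ++ X.map FreeGroup.invRev,
    tableOf m (wordAction gens u ∘ ofTable t) ∈ C) ∧
  tableOf m (wordAction gens w) ∉ C

section Soundness

variable {m : ℕ} {gens : List (List ℕ × List ℕ)}

theorem wordAction_append (u v : Word n) :
    wordAction gens (u ++ v) = wordAction gens u ∘ wordAction gens v := by
  funext j
  simp [wordAction, List.foldr_append]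

theorem wordAction_eq_self (hgens : ∀ p ∈ gens, p.1.length ≤ m ∧ p.2.length ≤ m)
    (w : Word n) {j : ℕ} (hj : m ≤ j) : wordAction gens w j = j := by
  induction w with
  | nil => rfl
  | cons l w ih =>
    refine (congrArg _ ih).trans (ofTable_eq_self ?_ hj)
    have hp : (gens.getD l.1 ([], [])).1.length ≤ m ∧
        (gens.getD l.1 ([], [])).2.length ≤ m := by
      rcases List.getD_mem_or_eq_default gens l.1 ([], []) with h | h
      · exact hgens _ h
      · rw [h]; simp
    obtain ⟨x, _ | _⟩ := l
    exacts [hp.2, hp.1]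

theorem wordAction_eq_id (hgens : ∀ p ∈ gens, p.1.length ≤ m ∧ p.2.length ≤ m)
    {r : Word n} (hr : tableOf m (wordAction gens r) = tableOf m id) : wordAction gens r = id :=
  eq_of_tableOf_eq (fun _ => wordAction_eq_self hgens r) (fun _ _ => rfl) hr

theorem exists_lift_eq_wordAction (hgens : ∀ p ∈ gens, p.1.length ≤ m ∧ p.2.length ≤ m)
    (hcancel : ∀ r ∈ cancelWords n, tableOf m (wordAction gens r) = tableOf m id) :
    ∃ f : Fin n → Equiv.Perm ℕ,
      ∀ w, ⇑(FreeGroup.lift f (FreeGroup.mk w)) = wordAction gens w := by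
  have hid : ∀ x : Fin n, ∀ b : Bool, wordAction gens [(x, b), (x, !b)] = id := fun x b =>
    wordAction_eq_id hgens (hcancel _ (by cases b <;> simp [cancelWords]))
  let letter (x : Fin n) : Equiv.Perm ℕ :=
    { toFun := wordAction gens [(x, true)]
      invFun := wordAction gens [(x, false)]
      left_inv := congrFun (hid x false)
      right_inv := congrFun (hid x true) }
  refine ⟨letter, fun w => ?_⟩
  induction w with
  | nil => rfl
  | cons l w ih =>
    rw [← List.singleton_append, ← FreeGroup.mul_mk, map_mul, Equiv.Perm.coe_mul, ih,
      wordAction_append]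
    obtain ⟨x, _ | _⟩ := l
    · rw [show FreeGroup.mk [(x, false)] = (FreeGroup.of x)⁻¹ from rfl, map_inv,
        FreeGroup.lift_apply_of]
      rfl
    · rw [show FreeGroup.mk [(x, true)] = FreeGroup.of x from rfl, FreeGroup.lift_apply_of]
      rfl

theorem exists_hom_eq_wordAction {R : List (Word n)} (h : IsPermRep R m gens) :
    ∃ ψ : PresentedGroup (relsOf R) →* Equiv.Perm ℕ,
      ∀ w, ⇑(ψ (wordElt R w)) = wordAction gens w := by
  obtain ⟨hgens, hrels⟩ := h
  obtain ⟨f, hf⟩ :=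
    exists_lift_eq_wordAction hgens fun r hr => hrels r (List.mem_append_right _ hr)
  have hR : ∀ r ∈ relsOf R, FreeGroup.lift f r = 1 := by
    rintro _ ⟨r, hr, rfl⟩
    exact Equiv.ext (congrFun ((hf r).trans
      (wordAction_eq_id hgens (hrels r (List.mem_append_left _ hr)))))
  exact ⟨PresentedGroup.toGroup hR, hf⟩

theorem wordElt_notMem_closure_of_isNonMembershipCert {R X : List (Word n)} {w : Word n}
    {C : List (List ℕ)} (h : IsNonMembershipCert R X w m gens C) :
    wordElt R w ∉ Subgroup.closure {x | ∃ u ∈ X, x = wordElt R u} := by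
  obtain ⟨hrep, hone, hclosed, hw⟩ := h
  obtain ⟨ψ, hψ⟩ := exists_hom_eq_wordAction hrep
  have hfix (y : PresentedGroup (relsOf R)) (j : ℕ) (hj : m ≤ j) : ψ y j = j := by
    obtain ⟨u, rfl⟩ := wordElt_surjective R y
    rw [hψ]
    exact wordAction_eq_self hrep.1 u hj
  have hmul : ∀ u ∈ X ++ X.map FreeGroup.invRev, ∀ y, tableOf m (ψ y) ∈ C →
      tableOf m (ψ (wordElt R u * y)) ∈ C := by
    intro u hu y hy
    simpa only [ofTable_tableOf (hfix y), ← hψ, map_mul, Equiv.Perm.coe_mul] using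
      hclosed _ hy u hu
  suffices hH : ∀ y ∈ Subgroup.closure {x | ∃ u ∈ X, x = wordElt R u},
      tableOf m (ψ y) ∈ C from fun hmem => hw (hψ w ▸ hH _ hmem)
  intro y hy
  induction hy using Subgroup.closure_induction_left with
  | one => simpa using hone
  | mul_left _ hx y _ ih =>
    obtain ⟨u, hu, rfl⟩ := hx
    exact hmul u (List.mem_append_left _ hu) y ih
  | inv_mul_cancel _ hx y _ ih =>
    obtain ⟨u, hu, rfl⟩ := hx
    rw [← wordElt_invRev]
    exact hmul _ (List.mem_append_right _ (List.mem_map_of_mem hu)) y ih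

end Soundness

section Completeness

variable {R : List (Word n)} {m : ℕ}

def tablesOf (R : List (Word n)) (m : ℕ) (ρ : PresentedGroup (relsOf R) →* Equiv.Perm ℕ) :
    List (List ℕ × List ℕ) :=
  (List.finRange n).map fun x =>
    (tableOf m (ρ (wordElt R [(x, true)])), tableOf m (ρ (wordElt R [(x, false)])))

theorem wordAction_tablesOf {ρ : PresentedGroup (relsOf R) →* Equiv.Perm ℕ}
    (hfix : ∀ y j, m ≤ j → ρ y j = j) (w : Word n) :
    wordAction (tablesOf R m ρ) w = ρ (wordElt R w) := by
  induction w with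
  | nil => funext j; simp [wordAction, wordElt, ← FreeGroup.one_eq_mk]
  | cons l w ih =>
    have hl : letterTable (tablesOf R m ρ) l = tableOf m (ρ (wordElt R [l])) := by
      obtain ⟨x, _ | _⟩ := l <;> simp [letterTable, tablesOf, List.getD_eq_getElem?_getD]
    funext j
    change ofTable (letterTable _ l) (wordAction _ w j) = _
    rw [hl, ih, ofTable_tableOf (hfix _), show l :: w = [l] ++ w from rfl, wordElt_append, map_mul,
      Equiv.Perm.coe_mul, Function.comp_apply]

theorem wordElt_cancelWord {r : Word n} (hr : r ∈ cancelWords n) : wordElt R r = 1 := by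
  simp only [cancelWords, List.mem_flatMap, List.mem_finRange, true_and, List.mem_cons,
    List.not_mem_nil, or_false] at hr
  obtain ⟨x, b, rfl⟩ : ∃ x b, r = [(x, b)] ++ FreeGroup.invRev [(x, b)] := by
    obtain ⟨x, rfl | rfl⟩ := hr
    exacts [⟨x, true, rfl⟩, ⟨x, false, rfl⟩]
  rw [wordElt_append, wordElt_invRev, mul_inv_cancel]

theorem exists_isNonMembershipCert_of_hom {X : List (Word n)} {w : Word n}
    (ρ : PresentedGroup (relsOf R) →* Equiv.Perm ℕ) (hfix : ∀ y j, m ≤ j → ρ y j = j)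
    (hfin : (Set.range ρ).Finite)
    (hw : ρ (wordElt R w) ∉ ρ '' Subgroup.closure {x | ∃ u ∈ X, x = wordElt R u}) :
    ∃ gens C, IsNonMembershipCert R X w m gens C := by
  set H := Subgroup.closure {x | ∃ u ∈ X, x = wordElt R u}
  have hC : ((fun y => tableOf m (ρ y)) '' (H : Set _)).Finite :=
    (hfin.image fun σ : Equiv.Perm ℕ => tableOf m σ).subset
      (by rintro _ ⟨y, -, rfl⟩; exact ⟨ρ y, ⟨y, rfl⟩, rfl⟩)
  have hmemC : ∀ t, t ∈ hC.toFinset.toList ↔ ∃ y ∈ H, tableOf m (ρ y) = t := by simp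
  have hact := wordAction_tablesOf hfix
  refine ⟨tablesOf R m ρ, hC.toFinset.toList, ⟨?_, ?_⟩, ?_, ?_, ?_⟩
  · simp [tablesOf, tableOf]
  · intro r hr
    suffices wordElt R r = 1 by rw [hact, this, map_one]; rfl
    rcases List.mem_append.mp hr with hr | hr
    · exact PresentedGroup.one_of_mem ⟨r, hr, rfl⟩
    · exact wordElt_cancelWord hr
  · exact (hmemC _).2 ⟨1, H.one_mem, by rw [map_one]; rfl⟩
  · intro t ht u hu
    obtain ⟨y, hy, rfl⟩ := (hmemC t).1 ht
    have hu' : wordElt R u ∈ H := by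
      rcases List.mem_append.mp hu with hu | hu
      · exact Subgroup.subset_closure ⟨u, hu, rfl⟩
      · obtain ⟨v, hv, rfl⟩ := List.mem_map.mp hu
        rw [wordElt_invRev]
        exact H.inv_mem (Subgroup.subset_closure ⟨v, hv, rfl⟩)
    refine (hmemC _).2 ⟨_, H.mul_mem hu' hy, ?_⟩
    rw [hact, ofTable_tableOf (hfix y), map_mul, Equiv.Perm.coe_mul]
  · rw [hmemC, hact]
    rintro ⟨y, hy, hyw⟩
    exact hw ⟨y, hy, DFunLike.coe_injective (eq_of_tableOf_eq (hfix _) (hfix _) hyw)⟩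

end Completeness

theorem wordElt_notMem_closure_iff_exists_isNonMembershipCert {R : List (Word n)}
    (hsep : SubgroupSeparable (PresentedGroup (relsOf R))) (X : List (Word n)) (w : Word n) :
    wordElt R w ∉ Subgroup.closure {x | ∃ u ∈ X, x = wordElt R u} ↔
      ∃ m gens C, IsNonMembershipCert R X w m gens C := by
  refine ⟨fun hw => ?_, fun ⟨_, _, _, h⟩ => wordElt_notMem_closure_of_isNonMembershipCert h⟩
  have hfg : (Subgroup.closure {x | ∃ u ∈ X, x = wordElt R u}).FG :=
    (Subgroup.fg_iff _).2 ⟨_, rfl, (X.finite_toSet.image (wordElt R)).subset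
      (by rintro _ ⟨u, hu, rfl⟩; exact ⟨u, hu, rfl⟩)⟩
  obtain ⟨Q, _, _, f, hf⟩ := hsep _ hfg _ hw
  obtain ⟨m, κ, hκ, hfix⟩ := exists_injective_hom_perm_nat Q
  refine ⟨m, exists_isNonMembershipCert_of_hom (κ.comp f) (fun y => hfix (f y))
    ((Set.finite_range κ).subset ?_) ?_⟩
  · rintro _ ⟨y, rfl⟩
    exact ⟨f y, rfl⟩
  · rintro ⟨y, hy, hyw⟩
    exact hf ⟨y, hy, hκ hyw⟩

section Computability

variable {α : Type*} [Primcodable α]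

theorem primrec_ofTable : Primrec₂ ofTable :=
  option_getD.comp list_getElem? snd

theorem primrec_tableOf {m : α → ℕ} {f : α → ℕ → ℕ} (hm : Primrec m)
    (hf : Primrec₂ f) : Primrec fun a => tableOf (m a) (f a) :=
  list_map (list_range.comp hm) hf

theorem primrec_wordAction {gens : α → List (List ℕ × List ℕ)} {w : α → Word n}
    {j : α → ℕ} (hgens : Primrec gens) (hw : Primrec w) (hj : Primrec j) :
    Primrec fun a => wordAction (gens a) (w a) (j a) := by
  have hletter : Primrec₂ (letterTable (n := n)) :=
    have hpair := (list_getD ([], [])).comp fst (fin_val.comp (fst.comp snd))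
    (Primrec.cond (snd.comp snd) (fst.comp hpair) (snd.comp hpair)).to₂
  exact list_foldr hw hj (primrec_ofTable.comp (hletter.comp (hgens.comp fst) (fst.comp snd))
    (snd.comp snd)).to₂

theorem primrecRel_isPermRep (R : List (Word n)) : PrimrecRel (IsPermRep R) := by
  have hlen : PrimrecRel fun (m : ℕ) (gens : List (List ℕ × List ℕ)) =>
      ∀ p ∈ gens, p.1.length ≤ m ∧ p.2.length ≤ m :=
    (PrimrecRel.forall_mem_list
      (R := fun (p : List ℕ × List ℕ) m => p.1.length ≤ m ∧ p.2.length ≤ m)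
      ((nat_le.comp (list_length.comp (fst.comp fst)) snd).and
        (nat_le.comp (list_length.comp (snd.comp fst)) snd))).comp snd fst
  have hrels : PrimrecRel fun (m : ℕ) (gens : List (List ℕ × List ℕ)) =>
      ∀ r ∈ R ++ cancelWords n, tableOf m (wordAction gens r) = tableOf m id :=
    (PrimrecRel.forall_mem_list (R := fun (r : Word n) (q : ℕ × List (List ℕ × List ℕ)) =>
        tableOf q.1 (wordAction q.2 r) = tableOf q.1 id)
      (Primrec.eq.comp
        (primrec_tableOf (fst.comp snd)
          (primrec_wordAction (snd.comp (snd.comp fst)) (fst.comp fst) snd).to₂)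
        (primrec_tableOf (fst.comp snd) Primrec₂.right))).comp (const _) Primrec.id
  exact hlen.and hrels

theorem primrecRel_isNonMembershipCert (R : List (Word n)) :
    PrimrecRel fun (p : List (Word n) × Word n)
      (c : ℕ × List (List ℕ × List ℕ) × List (List ℕ)) =>
      IsNonMembershipCert R p.1 p.2 c.1 c.2.1 c.2.2 := by
  let P := (List (Word n) × Word n) × ℕ × List (List ℕ × List ℕ) × List (List ℕ)
  have hX : Primrec fun q : P => q.1.1 := fst.comp fst
  have hw : Primrec fun q : P => q.1.2 := snd.comp fst
  have hm : Primrec fun q : P => q.2.1 := fst.comp snd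
  have hg : Primrec fun q : P => q.2.2.1 := fst.comp (snd.comp snd)
  have hC : Primrec fun q : P => q.2.2.2 := snd.comp (snd.comp snd)
  have hone : PrimrecPred fun q : P => tableOf q.2.1 id ∈ q.2.2.2 :=
    PrimrecRel.mem.comp (primrec_tableOf hm Primrec₂.right) hC
  have hstep : PrimrecRel fun (u : Word n) (tq : List ℕ × P) =>
      tableOf tq.2.2.1 (wordAction tq.2.2.2.1 u ∘ ofTable tq.1) ∈ tq.2.2.2.2 :=
    PrimrecRel.mem.comp
      (primrec_tableOf (hm.comp (snd.comp snd))
        (primrec_wordAction (hg.comp (snd.comp (snd.comp fst))) (fst.comp fst)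
          (primrec_ofTable.comp (fst.comp (snd.comp fst)) snd)).to₂)
      (hC.comp (snd.comp snd))
  have hXs : Primrec fun q : P => q.1.1 ++ q.1.1.map FreeGroup.invRev :=
    list_append.comp hX (list_map hX (FreeGroup.primrec_invRev.comp snd).to₂)
  have hclosed : PrimrecPred fun q : P =>
      ∀ t ∈ q.2.2.2, ∀ u ∈ q.1.1 ++ q.1.1.map FreeGroup.invRev,
        tableOf q.2.1 (wordAction q.2.2.1 u ∘ ofTable t) ∈ q.2.2.2 :=
    (PrimrecRel.forall_mem_list (R := fun (t : List ℕ) (q : P) =>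
        ∀ u ∈ q.1.1 ++ q.1.1.map FreeGroup.invRev,
          tableOf q.2.1 (wordAction q.2.2.1 u ∘ ofTable t) ∈ q.2.2.2)
      ((PrimrecRel.forall_mem_list hstep).comp (hXs.comp snd) Primrec.id)).comp hC Primrec.id
  have hout : PrimrecPred fun q : P => tableOf q.2.1 (wordAction q.2.2.1 q.1.2) ∉ q.2.2.2 :=
    (PrimrecRel.mem.comp
      (primrec_tableOf hm (primrec_wordAction (hg.comp fst) (hw.comp fst) snd).to₂) hC).not
  exact ((primrecRel_isPermRep R).comp hm hg).and (hone.and (hclosed.and hout))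

end Computability

end MembershipProblem

/-- If the finitely presented group `PresentedGroup (relsOf R)` is subgroup separable, then
the uniform membership problem for this presentation is decidable. -/
theorem membership_problem_solvable_of_subgroup_separable
    (n : ℕ) (R : List (List (Fin n × Bool)))
    (hsep : SubgroupSeparable (PresentedGroup (relsOf R))) :
    ComputablePred fun p : List (List (Fin n × Bool)) × List (Fin n × Bool) =>
      wordElt R p.2 ∈ Subgroup.closure {x | ∃ u ∈ p.1, x = wordElt R u} := by
  refine ComputablePred.computable_iff_re_compl_re'.2 ⟨?_, ?_⟩
  · exact (MembershipProblem.primrecRel_isMembershipCert R).exists_re.of_eq fun p =>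
      (MembershipProblem.wordElt_mem_closure_iff_exists_isMembershipCert R p.1 p.2).symm
  · exact (MembershipProblem.primrecRel_isNonMembershipCert R).exists_re.of_eq fun p => by
      simp only [Prod.exists,
        MembershipProblem.wordElt_notMem_closure_iff_exists_isNonMembershipCert hsep]
end
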